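/- Let G be a graph with minimum degree ≥ D_min ≥ 2, let W be a d×d matrix, and let all node embeddings have unit ℓ2 norm. Under the GCN update h̃_v = W h_v/(d_v+1) + ∑_{u∈N(v)} W h_u/(√(d_v+1)·√(d_u+1)), removing one edge (u*,v*) changes the output at v* by at most (‖W‖_op)·( (1 - 1/D_min)/(2 D_min) + 1/(D_min(D_min+1)) + 1/(D_min+1) ), i.e., ‖h̃_{v*} - h̃'_{v*}‖₂ ≤ ((1-1/D_min)/(2D_min) + 1/(D_min(D_min+1)) + 1/(D_min+1))·‖W‖_op. -/

import Mathlib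

/-!
Deleting the edge `(u*, v*)` perturbs the GCN output at `v*` in three ways: the self-loop weight
moves from `1/(n+1)` to `1/n` (where `n = d_{v*}`), each of the `n - 1` surviving neighbours `u`
has its weight moved from `1/(√(n+1) √(d_u+1))` to `1/(√n √(d_u+1))`, and the message from `u*`
disappears. Unit embeddings make every message `W h_u` of norm at most `‖W‖`, so the three
contributions are bounded by `1/(n(n+1))`, `(n-1)(1/√n - 1/√(n+1))/√(D+1)` and `1/(D+1)` times
`‖W‖`. The first and last are monotone in the degrees. For the middle one,
`1/√n - 1/√(n+1) ≤ 1/(2n√n)`, and `(n-1)/(2n√n√(D+1)) ≤ (D-1)/(2D²)` becomes, after squaring, the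
polynomial inequality `(n-1)² D⁴ ≤ (D-1)² (D+1) n³`, whose difference has only positive
coefficients once expanded in `D - 2` and `n - D`.
-/

open Finset Real
open scoped NNReal

section DegreeCoefficients

variable {D n m : ℝ}

lemma abs_inv_add_one_sub_inv_le (hD : 0 < D) (hn : D ≤ n) :
    |(n + 1)⁻¹ - n⁻¹| ≤ 1 / (D * (D + 1)) := by
  have hn0 : 0 < n := hD.trans_le hn
  rw [abs_sub_comm, abs_of_nonneg (sub_nonneg.2 (inv_anti₀ hn0 (by linarith))),
    inv_sub_inv hn0.ne' (by positivity), add_sub_cancel_left]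
  exact one_div_le_one_div_of_le (by positivity) (by gcongr)

lemma inv_sqrt_add_one_mul_sqrt_add_one_le (hD : 0 ≤ D) (hn : D ≤ n) (hm : D ≤ m) :
    (√(n + 1) * √(m + 1))⁻¹ ≤ 1 / (D + 1) := by
  rw [← sqrt_mul (by linarith), inv_eq_one_div]
  refine one_div_le_one_div_of_le (by positivity) ((le_sqrt (by positivity) (by nlinarith)).2 ?_)
  nlinarith

lemma abs_inv_sqrt_mul_sub_inv_sqrt_mul_le (hn : 0 < n) (hD : 0 ≤ D) (hm : D ≤ m) :
    |(√(n + 1) * √(m + 1))⁻¹ - (√n * √(m + 1))⁻¹| ≤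
      ((√n)⁻¹ - (√(n + 1))⁻¹) * (√(D + 1))⁻¹ := by
  have hgap : 0 ≤ (√n)⁻¹ - (√(n + 1))⁻¹ :=
    sub_nonneg.2 (inv_anti₀ (sqrt_pos.2 hn) (sqrt_le_sqrt (by linarith)))
  rw [mul_inv, mul_inv, ← sub_mul, abs_mul, abs_sub_comm, abs_of_nonneg hgap,
    abs_of_nonneg (by positivity)]
  exact mul_le_mul_of_nonneg_left
    (inv_anti₀ (sqrt_pos.2 (by linarith)) (sqrt_le_sqrt (by linarith))) hgap

lemma inv_sqrt_sub_inv_sqrt_add_one_le (hn : 0 < n) :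
    (√n)⁻¹ - (√(n + 1))⁻¹ ≤ 1 / (2 * n * √n) := by
  have hs : 0 < √n := sqrt_pos.2 hn
  have hst : √n ≤ √(n + 1) := sqrt_le_sqrt (by linarith)
  have hsq : (√(n + 1) - √n) * (√(n + 1) + √n) = 1 := by
    linear_combination sq_sqrt (show 0 ≤ n + 1 by linarith) - sq_sqrt hn.le
  calc (√n)⁻¹ - (√(n + 1))⁻¹ = 1 / (√n * √(n + 1) * (√(n + 1) + √n)) := by
        field_simp; linear_combination hsq
    _ ≤ 1 / (2 * n * √n) := by
        refine one_div_le_one_div_of_le (by positivity) ?_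
        calc 2 * n * √n = √n * √n * (√n + √n) := by rw [mul_self_sqrt hn.le]; ring
          _ ≤ √n * √(n + 1) * (√(n + 1) + √n) := by gcongr

lemma sub_one_sq_mul_pow_four_le (hD : 2 ≤ D) (hn : D ≤ n) :
    (n - 1) ^ 2 * D ^ 4 ≤ (D - 1) ^ 2 * (D + 1) * n ^ 3 := by
  lift D - 2 to ℝ≥0 using (by linarith) with s hs
  lift n - D to ℝ≥0 using (by linarith) with t ht
  rw [show n = 2 + s + t by linarith, show D = 2 + s by linarith, ← sub_nonneg]
  ring_nf
  positivity

lemma sub_one_mul_inv_sqrt_sub_mul_inv_sqrt_le (hD : 2 ≤ D) (hn : D ≤ n) :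
    (n - 1) * ((√n)⁻¹ - (√(n + 1))⁻¹) * (√(D + 1))⁻¹ ≤ (1 - 1 / D) / (2 * D) := by
  have hn0 : 0 < n := by linarith
  have hroot : (n - 1) * D ^ 2 ≤ (D - 1) * (n * √n * √(D + 1)) := by
    refine le_of_pow_le_pow_left₀ two_ne_zero (mul_nonneg (by linarith) (by positivity)) ?_
    calc ((n - 1) * D ^ 2) ^ 2 = (n - 1) ^ 2 * D ^ 4 := by ring
      _ ≤ (D - 1) ^ 2 * (D + 1) * n ^ 3 := sub_one_sq_mul_pow_four_le hD hn
      _ = ((D - 1) * (n * √n * √(D + 1))) ^ 2 := by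
        rw [mul_pow, mul_pow, mul_pow, sq_sqrt hn0.le, sq_sqrt (by linarith)]; ring
  calc (n - 1) * ((√n)⁻¹ - (√(n + 1))⁻¹) * (√(D + 1))⁻¹
      ≤ (n - 1) * (1 / (2 * n * √n)) * (√(D + 1))⁻¹ := by
        gcongr
        · linarith
        · exact inv_sqrt_sub_inv_sqrt_add_one_le hn0
    _ = (n - 1) / (2 * (n * √n * √(D + 1))) := by field_simp
    _ ≤ (D - 1) / (2 * D ^ 2) := by
        rw [div_le_div_iff₀ (by positivity) (by positivity)]; nlinarith [hroot]
    _ = (1 - 1 / D) / (2 * D) := by field_simp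

end DegreeCoefficients

lemma smul_add_sum_sub_smul_add_sum_sdiff_singleton {ι R E : Type*} [DecidableEq ι] [Ring R]
    [AddCommGroup E] [Module R E] {s : Finset ι} {a : ι} (ha : a ∈ s) (α α' : R)
    (β β' : ι → R) (x : E) (f : ι → E) :
    (α • x + ∑ i ∈ s, β i • f i) - (α' • x + ∑ i ∈ s \ {a}, β' i • f i) =
      (α - α') • x + ∑ i ∈ s \ {a}, (β i - β' i) • f i + β a • f a := by
  rw [sum_eq_sum_sdiff_singleton_add ha]
  simp only [sub_smul, sum_sub_distrib]
  abel

lemma norm_smul_le_mul_of_le {E : Type*} [SeminormedAddCommGroup E] [NormedSpace ℝ E]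
    {c C M : ℝ} {x : E} (hc : |c| ≤ C) (hx : ‖x‖ ≤ M) : ‖c • x‖ ≤ C * M := by
  rw [norm_smul, Real.norm_eq_abs]
  exact mul_le_mul hc hx (norm_nonneg x) ((abs_nonneg c).trans hc)

lemma norm_sum_le_card_mul {ι E : Type*} [SeminormedAddCommGroup E] {s : Finset ι} {f : ι → E}
    {B : ℝ} (h : ∀ i ∈ s, ‖f i‖ ≤ B) : ‖∑ i ∈ s, f i‖ ≤ #s * B := by
  simpa using norm_sum_le_of_le s h

theorem stmt_8 {V : Type*} [Fintype V] [DecidableEq V] {d : ℕ}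
    (G : SimpleGraph V) [DecidableRel G.Adj] (Dmin : ℕ) (hDmin : 2 ≤ Dmin)
    (hdeg : ∀ v : V, Dmin ≤ G.degree v)
    (W : EuclideanSpace ℝ (Fin d) →L[ℝ] EuclideanSpace ℝ (Fin d))
    (h : V → EuclideanSpace ℝ (Fin d)) (hnorm : ∀ u : V, ‖h u‖ = 1)
    (ustar vstar : V) (hadj : G.Adj ustar vstar) :
    ‖(((G.degree vstar : ℝ) + 1)⁻¹ • W (h vstar) +
        ∑ u ∈ G.neighborFinset vstar,
          (Real.sqrt ((G.degree vstar : ℝ) + 1) * Real.sqrt ((G.degree u : ℝ) + 1))⁻¹ • W (h u)) -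
      (((G.degree vstar : ℝ))⁻¹ • W (h vstar) +
        ∑ u ∈ G.neighborFinset vstar \ {ustar},
          (Real.sqrt ((G.degree vstar : ℝ)) * Real.sqrt ((G.degree u : ℝ) + 1))⁻¹ • W (h u))‖ ≤
      ((1 - 1 / (Dmin : ℝ)) / (2 * (Dmin : ℝ)) + 1 / ((Dmin : ℝ) * ((Dmin : ℝ) + 1)) +
        1 / ((Dmin : ℝ) + 1)) * ‖W‖ := by
  have hD : (2 : ℝ) ≤ Dmin := by exact_mod_cast hDmin
  have hdegD : ∀ v, (Dmin : ℝ) ≤ G.degree v := fun v => by exact_mod_cast hdeg v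
  set D : ℝ := (Dmin : ℝ)
  set n : ℝ := (G.degree vstar : ℝ)
  have hnD : D ≤ n := hdegD vstar
  have hmem : ustar ∈ G.neighborFinset vstar := (G.mem_neighborFinset _ _).2 hadj.symm
  have hcard : (#(G.neighborFinset vstar \ {ustar}) : ℝ) = n - 1 := by
    rw [sdiff_singleton_eq_erase, card_erase_of_mem hmem, G.card_neighborFinset_eq_degree,
      Nat.cast_pred (by have := hdeg vstar; omega)]
  have hmsg : ∀ u, ‖W (h u)‖ ≤ ‖W‖ := fun u => by
    simpa using W.le_opNorm_of_le (hnorm u).le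
  rw [smul_add_sum_sub_smul_add_sum_sdiff_singleton hmem]
  refine norm_add₃_le.trans ?_
  have hself := norm_smul_le_mul_of_le (abs_inv_add_one_sub_inv_le (by linarith) hnD)
    (hmsg vstar)
  have hkept : ‖∑ u ∈ G.neighborFinset vstar \ {ustar},
      ((√(n + 1) * √(G.degree u + 1))⁻¹ - (√n * √(G.degree u + 1))⁻¹) • W (h u)‖ ≤
        (1 - 1 / D) / (2 * D) * ‖W‖ := by
    refine (norm_sum_le_card_mul fun u _ => norm_smul_le_mul_of_le
      (abs_inv_sqrt_mul_sub_inv_sqrt_mul_le (by linarith) (by linarith) (hdegD u))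
      (hmsg u)).trans ?_
    rw [hcard, ← mul_assoc, ← mul_assoc]
    exact mul_le_mul_of_nonneg_right (sub_one_mul_inv_sqrt_sub_mul_inv_sqrt_le hD hnD)
      (norm_nonneg W)
  have hremoved := norm_smul_le_mul_of_le ((abs_of_nonneg (by positivity)).trans_le
    (inv_sqrt_add_one_mul_sqrt_add_one_le (by linarith) hnD (hdegD ustar))) (hmsg ustar)
  linarith
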